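/- Let L be a diffusive symmetric Markov generator with discrete spectrum, Fᵢ ∈ ker(L + λ_{k_i} Id) and Fⱼ ∈ ker(L + λ_{k_j} Id) jointly chaotic eigenfunctions (i.e., Fᵢ Fⱼ ∈ ⊕_{r: λ_r ≤ λ_{k_i}+λ_{k_j}} ker(L + λ_r Id)), and C_{ij} ∈ ℝ. Then with a_{ij} = 2λ_{k_j}/(λ_{k_i}+λ_{k_j}), ∫_E (Γ(Fᵢ, -L⁻¹Fⱼ) - C_{ij})² dμ ≤ (1/(a_{ij}λ_{k_j})) ∫_E (FᵢFⱼ - a_{ij}C_{ij})(Γ(Fᵢ,Fⱼ) - λ_{k_j}C_{ij}) dμ. -/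

import Mathlib

open MeasureTheory Finset

/-!
Put `η = λ_{k_i} + λ_{k_j}` and `G = FᵢFⱼ - a C = ∑ r, q r - a C`. Because `Fᵢ` and `Fⱼ` are
eigenfunctions, `2 (Γ(Fᵢ, Fⱼ) - λ_{k_j} C) = (L + η) G`, so the inequality is
`∫ ((L + η) G)² ≤ η ∫ G (L + η) G` up to the factor `4 λ_{k_j}²`. The difference of the two sides
is `∫ (-L G) (L + η) G = ∑ r, λ_r (η - λ_r) ‖q r‖²` by orthogonality, the constant `a C`
contributing nothing since `λ_r ∫ q r = 0` by symmetry of `L` against `1`; every term is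
nonnegative because `0 ≤ λ_r ≤ η`.
-/

section Orthogonal

variable {E ι : Type*} [MeasurableSpace E] {μ : Measure E} {S : Finset ι} {q : ι → E → ℝ}

lemma memLp_two_sum_mul_sub_const [IsFiniteMeasure μ] (hmem : ∀ r ∈ S, MemLp (q r) 2 μ)
    (α : ι → ℝ) (c : ℝ) : MemLp (fun x => ∑ r ∈ S, α r * q r x - c) 2 μ :=
  (memLp_finsetSum S fun r hr => (hmem r hr).const_mul (α r)).sub (memLp_const c)

lemma integral_sum_mul_sum_of_orthogonal (hmem : ∀ r ∈ S, MemLp (q r) 2 μ)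
    (horth : ∀ r ∈ S, ∀ s ∈ S, r ≠ s → ∫ x, q r x * q s x ∂μ = 0) (α β : ι → ℝ) :
    ∫ x, (∑ r ∈ S, α r * q r x) * (∑ s ∈ S, β s * q s x) ∂μ =
      ∑ r ∈ S, α r * β r * ∫ x, q r x * q r x ∂μ := by
  have hqq : ∀ r ∈ S, ∀ s ∈ S, Integrable (fun x => α r * β s * (q r x * q s x)) μ :=
    fun r hr s hs => ((hmem r hr).integrable_mul (hmem s hs)).const_mul _
  simp_rw [sum_mul_sum, show ∀ r s x, α r * q r x * (β s * q s x) =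
    α r * β s * (q r x * q s x) from fun r s x => by ring]
  rw [integral_finsetSum _ fun r hr => integrable_finsetSum _ (hqq r hr)]
  refine sum_congr rfl fun r hr => ?_
  rw [integral_finsetSum _ (hqq r hr), sum_eq_single_of_mem r hr fun s hs hsr => ?_,
    integral_const_mul]
  rw [integral_const_mul, horth r hr s hs hsr.symm, mul_zero]

theorem integral_sq_shift_le_of_orthogonal [IsFiniteMeasure μ]
    (hmem : ∀ r ∈ S, MemLp (q r) 2 μ)
    (horth : ∀ r ∈ S, ∀ s ∈ S, r ≠ s → ∫ x, q r x * q s x ∂μ = 0) (lam : ι → ℝ) (η c : ℝ)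
    (hlam : ∀ r ∈ S, 0 ≤ lam r ∧ lam r ≤ η) (hmean : ∀ r ∈ S, lam r * ∫ x, q r x ∂μ = 0) :
    ∫ x, (∑ r ∈ S, (η - lam r) * q r x - η * c) ^ 2 ∂μ ≤
      η * ∫ x, (∑ r ∈ S, q r x - c) * (∑ r ∈ S, (η - lam r) * q r x - η * c) ∂μ := by
  set D := fun x => ∑ r ∈ S, (η - lam r) * q r x - η * c
  have hD : MemLp D 2 μ := memLp_two_sum_mul_sub_const hmem _ _
  have hG : MemLp (fun x => ∑ r ∈ S, q r x - c) 2 μ := by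
    simpa using memLp_two_sum_mul_sub_const hmem 1 c
  have hP : MemLp (fun x => ∑ r ∈ S, lam r * q r x) 2 μ := by
    simpa using memLp_two_sum_mul_sub_const hmem lam 0
  have hsplit : ∀ x, η * ((∑ r ∈ S, q r x - c) * D x) - D x ^ 2 =
      (∑ r ∈ S, lam r * q r x) * (∑ r ∈ S, (η - lam r) * q r x) -
        η * c * ∑ r ∈ S, lam r * q r x := by
    intro x
    have hlam_sum : ∑ r ∈ S, lam r * q r x = η * ∑ r ∈ S, q r x - ∑ r ∈ S, (η - lam r) * q r x := by
      rw [mul_sum, ← sum_sub_distrib]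
      exact sum_congr rfl fun r _ => by ring
    simp only [D]
    linear_combination (-(∑ r ∈ S, (η - lam r) * q r x - η * c)) * hlam_sum
  have hdiff : η * ∫ x, (∑ r ∈ S, q r x - c) * D x ∂μ - ∫ x, D x ^ 2 ∂μ =
      ∑ r ∈ S, lam r * (η - lam r) * ∫ x, q r x * q r x ∂μ := by
    have hGD : Integrable (fun x => η * ((∑ r ∈ S, q r x - c) * D x)) μ :=
      (hG.integrable_mul hD).const_mul η
    have hPQ : Integrable (fun x => (∑ r ∈ S, lam r * q r x) * ∑ r ∈ S, (η - lam r) * q r x) μ :=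
      hP.integrable_mul (by simpa using memLp_two_sum_mul_sub_const hmem (fun r => η - lam r) 0)
    rw [← integral_const_mul, ← integral_sub hGD hD.integrable_sq]
    simp_rw [hsplit]
    rw [integral_sub hPQ ((hP.integrable one_le_two).const_mul _),
      integral_sum_mul_sum_of_orthogonal hmem horth, integral_const_mul,
      integral_finsetSum _ fun r hr => ((hmem r hr).integrable one_le_two).const_mul _]
    simp_rw [integral_const_mul]
    rw [sum_eq_zero hmean, mul_zero, sub_zero]
  have hnonneg : 0 ≤ ∑ r ∈ S, lam r * (η - lam r) * ∫ x, q r x * q r x ∂μ :=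
    sum_nonneg fun r hr => mul_nonneg (mul_nonneg (hlam r hr).1 (sub_nonneg.2 (hlam r hr).2))
      (integral_nonneg fun x => mul_self_nonneg _)
  linarith

end Orthogonal

def IsCarreDuChamp {E : Type*} (L : (E → ℝ) →ₗ[ℝ] (E → ℝ))
    (Γ : (E → ℝ) → (E → ℝ) → (E → ℝ)) : Prop :=
  ∀ f g : E → ℝ, Γ f g = fun x =>
    (1 / 2) * (L (fun y => f y * g y) x - f x * L g x - g x * L f x)

section Generator

variable {E : Type*} (L : (E → ℝ) →ₗ[ℝ] (E → ℝ)) {Γ : (E → ℝ) → (E → ℝ) → (E → ℝ)}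

lemma carreDuChamp_of_eigen (hΓ : IsCarreDuChamp L Γ)
    {f g : E → ℝ} {α β : ℝ} (hf : L f = fun x => -α * f x) (hg : L g = fun x => -β * g x)
    (x : E) : Γ f g x = 1 / 2 * (L (fun y => f y * g y) x + (α + β) * (f x * g x)) := by
  rw [hΓ f g, hf, hg]
  ring

lemma carreDuChamp_const_mul_right (hΓ : IsCarreDuChamp L Γ)
    (f g : E → ℝ) (c : ℝ) (x : E) : Γ f (fun y => c * g y) x = c * Γ f g x := by
  have hfg : (fun y => f y * (c * g y)) = c • fun y => f y * g y := by
    ext y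
    simp only [Pi.smul_apply, smul_eq_mul]
    ring
  rw [hΓ f, hΓ f g, hfg, show (fun y => c * g y) = c • g from rfl, L.map_smul, L.map_smul]
  simp only [Pi.smul_apply, smul_eq_mul]
  ring

lemma carreDuChamp_eq_half_sum_of_chaos {ι : Type*} {S : Finset ι} {q : ι → E → ℝ}
    {lam : ι → ℝ} (hΓ : IsCarreDuChamp L Γ)
    {f g : E → ℝ} {α β : ℝ} (hf : L f = fun x => -α * f x) (hg : L g = fun x => -β * g x)
    (hq : ∀ r ∈ S, L (q r) = fun x => -lam r * q r x) (hfg : ∀ x, f x * g x = ∑ r ∈ S, q r x)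
    (x : E) : Γ f g x = 1 / 2 * ∑ r ∈ S, (α + β - lam r) * q r x := by
  have hprod : (fun y => f y * g y) = ∑ r ∈ S, q r := by
    ext y
    rw [hfg, Finset.sum_apply]
  rw [carreDuChamp_of_eigen L hΓ hf hg, hprod, map_sum, Finset.sum_apply, hfg, mul_sum,
    ← sum_add_distrib]
  congr 1
  refine sum_congr rfl fun r hr => ?_
  rw [hq r hr]
  ring

lemma mul_integral_eq_zero_of_eigen [MeasurableSpace E] {μ : Measure E} (hL1 : L (fun _ => 1) = 0)
    (hsym : ∀ f g : E → ℝ, Integrable (fun x => f x * L g x) μ →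
      Integrable (fun x => L f x * g x) μ →
      ∫ x, f x * L g x ∂μ = ∫ x, L f x * g x ∂μ)
    {q : E → ℝ} {lam : ℝ} (hq : L q = fun x => -lam * q x) (hint : Integrable q μ) :
    lam * ∫ x, q x ∂μ = 0 := by
  have h := hsym (fun _ => 1) q (by simpa [hq] using hint.const_mul (-lam)) (by simp [hL1])
  simp only [hq, hL1, Pi.zero_apply, one_mul, zero_mul, integral_zero, neg_mul,
    integral_neg, neg_eq_zero, integral_const_mul] at h
  exact h

end Generator

theorem stmt_18_general {E : Type*} [MeasurableSpace E] (μ : Measure E) [IsProbabilityMeasure μ]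
    (L : (E → ℝ) →ₗ[ℝ] (E → ℝ)) (hL1 : L (fun _ => 1) = 0)
    (hsym : ∀ f g : E → ℝ, Integrable (fun x => f x * L g x) μ →
      Integrable (fun x => L f x * g x) μ →
      ∫ x, f x * L g x ∂μ = ∫ x, L f x * g x ∂μ)
    (Γ : (E → ℝ) → (E → ℝ) → (E → ℝ))
    (hΓ : ∀ f g : E → ℝ, Γ f g = fun x =>
      (1 / 2) * (L (fun y => f y * g y) x - f x * L g x - g x * L f x))
    (lam : ℕ → ℝ) (hlam0 : lam 0 = 0) (hmono : StrictMono lam)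
    (lki lkj : ℝ) (hki : 0 < lki) (hkj : 0 < lkj)
    (Fi Fj : E → ℝ)
    (heigi : L Fi = fun x => -lki * Fi x)
    (heigj : L Fj = fun x => -lkj * Fj x)
    -- joint chaoticity: FᵢFⱼ decomposes along eigenspaces with eigenvalues ≤ λ_{k_i}+λ_{k_j}
    (S : Finset ℕ) (hS : ∀ r ∈ S, lam r ≤ lki + lkj)
    (q : ℕ → E → ℝ) (heigq : ∀ r ∈ S, L (q r) = fun x => -lam r * q r x)
    (hchaos : ∀ x, Fi x * Fj x = ∑ r ∈ S, q r x)
    (hmem : ∀ r, MemLp (q r) 2 μ)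
    (horth : ∀ r ∈ S, ∀ s ∈ S, r ≠ s → ∫ x, q r x * q s x ∂μ = 0)
    (Cij : ℝ) (a : ℝ) (ha : a = 2 * lkj / (lki + lkj)) :
    ∫ x, (Γ Fi (fun y => (1 / lkj) * Fj y) x - Cij) ^ 2 ∂μ ≤
      (1 / (a * lkj)) *
        ∫ x, (Fi x * Fj x - a * Cij) * (Γ Fi Fj x - lkj * Cij) ∂μ := by
  have hη : lki + lkj ≠ 0 := (add_pos hki hkj).ne'
  have hΓij : ∀ x, Γ Fi Fj x = 1 / 2 * ∑ r ∈ S, (lki + lkj - lam r) * q r x :=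
    carreDuChamp_eq_half_sum_of_chaos L hΓ heigi heigj heigq hchaos
  have haη : (lki + lkj) * (a * Cij) = 2 * lkj * Cij := by
    rw [ha]
    field_simp
  have hlhs : ∀ x, (Γ Fi (fun y => 1 / lkj * Fj y) x - Cij) ^ 2 = (1 / (2 * lkj)) ^ 2 *
      (∑ r ∈ S, (lki + lkj - lam r) * q r x - (lki + lkj) * (a * Cij)) ^ 2 := by
    intro x
    rw [carreDuChamp_const_mul_right L hΓ, hΓij, haη]
    field_simp
  have hrhs : ∀ x, (Fi x * Fj x - a * Cij) * (Γ Fi Fj x - lkj * Cij) = 1 / 2 *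
      ((∑ r ∈ S, q r x - a * Cij) *
        (∑ r ∈ S, (lki + lkj - lam r) * q r x - (lki + lkj) * (a * Cij))) := by
    intro x
    rw [hΓij, hchaos, haη]
    ring
  have hspec := integral_sq_shift_le_of_orthogonal (fun r _ => hmem r) horth lam (lki + lkj)
    (a * Cij) (fun r hr => ⟨hlam0 ▸ hmono.monotone (Nat.zero_le r), hS r hr⟩)
    fun r hr => mul_integral_eq_zero_of_eigen L hL1 hsym (heigq r hr)
      ((hmem r).integrable one_le_two)
  have hcoeff : (1 / (2 * lkj)) ^ 2 * (lki + lkj) = 1 / (a * lkj) * (1 / 2) := by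
    rw [ha]
    field_simp
  simp_rw [hlhs, hrhs, integral_const_mul]
  calc _ ≤ (1 / (2 * lkj)) ^ 2 * ((lki + lkj) * _) := by gcongr
    _ = _ := by rw [← mul_assoc, hcoeff, mul_assoc]

/-- for jointly chaotic eigenfunctions `Fᵢ ∈ ker(L + λ_{k_i} Id)`,
`Fⱼ ∈ ker(L + λ_{k_j} Id)` (so `FᵢFⱼ` decomposes along eigenspaces with eigenvalues
`≤ λ_{k_i}+λ_{k_j}`) and any `C_{ij} ∈ ℝ`, with `a_{ij} = 2λ_{k_j}/(λ_{k_i}+λ_{k_j})`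
and `-L⁻¹Fⱼ = (1/λ_{k_j})Fⱼ`:
`∫ (Γ(Fᵢ,-L⁻¹Fⱼ) - C_{ij})² dμ
  ≤ (1/(a_{ij}λ_{k_j})) ∫ (FᵢFⱼ - a_{ij}C_{ij})(Γ(Fᵢ,Fⱼ) - λ_{k_j}C_{ij}) dμ`. -/
theorem stmt_18 {E : Type*} [MeasurableSpace E] (μ : Measure E) [IsProbabilityMeasure μ]
    (L : (E → ℝ) →ₗ[ℝ] (E → ℝ)) (hL1 : L (fun _ => 1) = 0)
    (hsym : ∀ f g : E → ℝ, Integrable (fun x => f x * L g x) μ →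
      Integrable (fun x => L f x * g x) μ →
      ∫ x, f x * L g x ∂μ = ∫ x, L f x * g x ∂μ)
    (Γ : (E → ℝ) → (E → ℝ) → (E → ℝ))
    (hΓ : ∀ f g : E → ℝ, Γ f g = fun x =>
      (1 / 2) * (L (fun y => f y * g y) x - f x * L g x - g x * L f x))
    (lam : ℕ → ℝ) (hlam0 : lam 0 = 0) (hmono : StrictMono lam)
    (lki lkj : ℝ) (hki : 0 < lki) (hkj : 0 < lkj)
    (Fi Fj : E → ℝ)
    (heigi : L Fi = fun x => -lki * Fi x)
    (heigj : L Fj = fun x => -lkj * Fj x)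
    -- joint chaoticity: FᵢFⱼ decomposes along eigenspaces with eigenvalues ≤ λ_{k_i}+λ_{k_j}
    (S : Finset ℕ) (hS : ∀ r ∈ S, lam r ≤ lki + lkj)
    (q : ℕ → E → ℝ) (heigq : ∀ r ∈ S, L (q r) = fun x => -lam r * q r x)
    (hchaos : ∀ x, Fi x * Fj x = ∑ r ∈ S, q r x)
    (hmem : ∀ r, MemLp (q r) 2 μ)
    (horth : ∀ r ∈ S, ∀ s ∈ S, r ≠ s → ∫ x, q r x * q s x ∂μ = 0)
    (Cij : ℝ) (a : ℝ) (ha : a = 2 * lkj / (lki + lkj))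
    (hint1 : Integrable (fun x => (Γ Fi (fun y => (1 / lkj) * Fj y) x - Cij) ^ 2) μ)
    (hint2 : Integrable
      (fun x => (Fi x * Fj x - a * Cij) * (Γ Fi Fj x - lkj * Cij)) μ) :
    ∫ x, (Γ Fi (fun y => (1 / lkj) * Fj y) x - Cij) ^ 2 ∂μ ≤
      (1 / (a * lkj)) *
        ∫ x, (Fi x * Fj x - a * Cij) * (Γ Fi Fj x - lkj * Cij) ∂μ :=
  stmt_18_general μ L hL1 hsym Γ hΓ lam hlam0 hmono lki lkj hki hkj Fi Fj heigi heigj S hS q heigq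
    hchaos hmem horth Cij a ha
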